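/- Every nice closed curve in the punctured sphere ℙ is not nullhomotopic in ℙ. -/

import Mathlib

open Real ContinuousMap

noncomputable section

abbrev E3 := EuclideanSpace ℝ (Fin 3)

def sphere2 : Set E3 := Metric.sphere 0 1

def eqPt (θ : ℝ) : E3 := (WithLp.equiv 2 _).symm ![Real.cos θ, Real.sin θ, 0]

lemma eqPt_mem_sphere2 (θ : ℝ) : eqPt θ ∈ sphere2 := by
  simp only [sphere2, mem_sphere_iff_norm, sub_zero, eqPt]
  rw [EuclideanSpace.norm_eq]
  simp [Fin.sum_univ_three, PiLp.toLp_apply]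

def puncture (k : ℕ) (j : Fin k) : E3 := eqPt (2 * π * j / k)

def Pset (k : ℕ) : Set E3 := sphere2 \ Set.range (puncture k)

abbrev PSub (k : ℕ) := ↥(Pset k)

def equatorSet (k : ℕ) : Set E3 := {x ∈ Pset k | x 2 = 0}

def arcSide (k : ℕ) (j : Fin k) : Set E3 :=
  {x | ∃ θ : ℝ, 2 * π * j / k < θ ∧ θ < 2 * π * (j + 1) / k ∧ x = eqPt θ}

def hemi : Bool → Set E3
  | true => {x | 0 < x 2}
  | false => {x | x 2 < 0}

structure IsNice (k : ℕ) (γ : C(Circle, PSub k)) (m : ℕ) (t : ℕ → ℝ) (σ : ℕ → Fin k) : Prop where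
  m_pos : 1 ≤ m
  mono : StrictMono t
  t_periodic : ∀ i, t (i + 2 * m) = t i + 2 * π
  σ_periodic : ∀ i, σ (i + 2 * m) = σ i
  preimage : ∀ z : Circle, ((γ z : E3) ∈ equatorSet k) ↔ ∃ i, z = Circle.exp (t i)
  code : ∀ i, ((γ (Circle.exp (t i)) : PSub k) : E3) ∈ arcSide k (σ i)
  adjacent : ∀ i, σ i ≠ σ (i + 1)
  alternate : ∃ b : Bool, ∀ i s, t i < s → s < t (i + 1) →
      ((γ (Circle.exp s) : PSub k) : E3) ∈ hemi (if Even i then b else !b)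

def IsNullCurve {k : ℕ} (γ : C(Circle, PSub k)) : Prop :=
  ∃ x, γ.Homotopic (ContinuousMap.const Circle x)

def NullLoop {X : Type*} [TopologicalSpace X] {x : X} (p : Path x x) : Prop :=
  p.Homotopic (Path.refl x)

def arcPath {X : Type*} [TopologicalSpace X] (δ : C(Circle, X)) (a b : ℝ) :
    Path (δ (Circle.exp a)) (δ (Circle.exp b)) where
  toFun u := δ (Circle.exp (a + u * (b - a)))
  continuous_toFun := by fun_prop
  source' := by simp
  target' := by
    have h : a + (1 : ℝ) * (b - a) = b := by ring
    simp [h]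

def AdmissibleWith (k m : ℕ) (t : ℕ → ℝ) (σ : ℕ → Fin k)
    (γ δ : C(Circle, PSub k)) (s s' : ℕ → ℝ) : Prop :=
  (∀ i, s i ≤ s' i) ∧
  (∀ i, s' i < s (i + 1)) ∧
  (∀ i, s (i + 2 * m) = s i + 2 * π) ∧
  (∀ i, s' (i + 2 * m) = s' i + 2 * π) ∧
  (∀ i, ((δ (Circle.exp (s i)) : PSub k) : E3) ∈ arcSide k (σ i) ∧
        ((δ (Circle.exp (s' i)) : PSub k) : E3) ∈ arcSide k (σ i)) ∧
  (∀ i, ∃ q : Path (δ (Circle.exp (s' i))) (δ (Circle.exp (s i))),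
      (∀ u, ((q u : PSub k) : E3) ∈ arcSide k (σ i)) ∧
      NullLoop ((arcPath δ (s i) (s' i)).trans q)) ∧
  (∀ i, ∃ q₁ : Path (γ (Circle.exp (t (i + 1)))) (δ (Circle.exp (s (i + 1)))),
        ∃ q₂ : Path (δ (Circle.exp (s' i))) (γ (Circle.exp (t i))),
      (∀ u, ((q₁ u : PSub k) : E3) ∈ arcSide k (σ (i + 1))) ∧
      (∀ u, ((q₂ u : PSub k) : E3) ∈ arcSide k (σ i)) ∧
      NullLoop ((arcPath γ (t i) (t (i + 1))).trans
        (q₁.trans (((arcPath δ (s' i) (s (i + 1))).symm).trans q₂))))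

def Admissible (k m : ℕ) (t : ℕ → ℝ) (σ : ℕ → Fin k) (γ δ : C(Circle, PSub k)) : Prop :=
  ∃ s s' : ℕ → ℝ, AdmissibleWith k m t σ γ δ s s'


/-!
Cover `ℙ` by the two open hemispheres and, for each side `e_j`, an open spherical cap around
its midpoint. Two hemispheres, or two caps, are disjoint, so the nerve of this cover is the
complete bipartite graph `K_{2,k}`, whose universal cover is a tree. A nice curve visits the
caps and hemispheres in the cyclic order `σ 0, h, σ 1, h', σ 2, …` with `σ i ≠ σ (i + 1)`,
which lifts to a non-closed path in the tree. A nullhomotopy, cut into a grid of cells fine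
enough for every cell to lie in one set of the cover (Lebesgue number), would carry this lift
row by row to the constant loop, whose lift is closed; neighbouring rows have lifts that stay
within one edge of each other, so closedness of the lift passes between them.
-/

namespace PuncturedSphere

variable {k : ℕ}

/-- Colours name the sets of the cover: `inl h` a hemisphere, `inr j` the cap around `e_j`. -/
abbrev Colour (k : ℕ) := Bool ⊕ Fin k

/-- Equal or adjacent in the nerve of the cover. -/
def Linked : Colour k → Colour k → Prop
  | .inl h, .inl h' => h = h'
  | .inr j, .inr j' => j = j'
  | _, _ => True

@[simp] lemma linked_inl_inl {h h' : Bool} : Linked (.inl h : Colour k) (.inl h') ↔ h = h' :=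
  .rfl

@[simp] lemma linked_inr_inr {j j' : Fin k} : Linked (.inr j : Colour k) (.inr j') ↔ j = j' :=
  .rfl

@[simp] lemma linked_inl_inr {h : Bool} {j : Fin k} : Linked (.inl h : Colour k) (.inr j) :=
  trivial

@[simp] lemma linked_inr_inl {h : Bool} {j : Fin k} : Linked (.inr j : Colour k) (.inl h) :=
  trivial

lemma Linked.eq_of_ne {p a a' : Colour k} (ha : Linked p a) (ha' : Linked p a')
    (haa' : Linked a a') (hap : a ≠ p) (hap' : a' ≠ p) : a = a' := by
  cases p <;> cases a <;> cases a' <;> simp_all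

/-- Vertices of the universal cover of the nerve, rooted at a hemisphere vertex: the list is the
reduced path of caps from the root, most recent first, and `cap j w` is the child of
`hemisphere w` through cap `j`. -/
inductive Vertex (k : ℕ)
  | hemisphere : List (Fin k) → Vertex k
  | cap : Fin k → List (Fin k) → Vertex k

namespace Vertex

/-- Hemispheres alternate along paths; `b` is the colour of the hemispheres at odd depth. -/
def hemColour (b : Bool) : List (Fin k) → Bool
  | [] => !b
  | _ :: w => !hemColour b w

@[simp] lemma hemColour_cons (b : Bool) (j : Fin k) (w : List (Fin k)) :
    hemColour b (j :: w) = !hemColour b w := rfl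

def Reduced : Vertex k → Prop
  | hemisphere w => w.IsChain (· ≠ ·)
  | cap j w => (j :: w).IsChain (· ≠ ·)

@[simp] lemma reduced_hemisphere {w : List (Fin k)} :
    (hemisphere w).Reduced ↔ w.IsChain (· ≠ ·) := .rfl

@[simp] lemma reduced_cap {j : Fin k} {w : List (Fin k)} :
    (cap j w).Reduced ↔ (j :: w).IsChain (· ≠ ·) := .rfl

variable (b : Bool)

def proj : Vertex k → Colour k
  | hemisphere w => .inl (hemColour b w)
  | cap j _ => .inr j

/-- The vertex over `c` equal or adjacent to `v`, when `proj b v` and `c` are linked. -/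
def step : Vertex k → Colour k → Vertex k
  | hemisphere w, .inl _ => hemisphere w
  | hemisphere w, .inr j => if w.head? = some j then cap j w.tail else cap j w
  | cap j w, .inl h => if h = hemColour b (j :: w) then hemisphere (j :: w) else hemisphere w
  | cap j w, .inr _ => cap j w

/-- Equal or adjacent in the tree. -/
def Near (v v' : Vertex k) : Prop :=
  v' = step b v (proj b v') ∧ v = step b v' (proj b v)

variable {b}

lemma reduced_step {v : Vertex k} (hv : v.Reduced) (c : Colour k) : (step b v c).Reduced := by
  rcases v with w | ⟨j, w⟩ <;> rcases c with h | j'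
  · exact hv
  · simp only [step]
    split_ifs <;> cases w <;> simp_all [eq_comm]
  · simp only [step]
    split_ifs
    · exact hv
    · exact hv.tail
  · exact hv

lemma step_proj (v : Vertex k) : step b v (proj b v) = v := by
  cases v <;> simp [step, proj]

lemma proj_step {v : Vertex k} {c : Colour k} (hc : Linked (proj b v) c) :
    proj b (step b v c) = c := by
  cases v <;> cases c <;> simp [step, proj] at hc ⊢ <;> (try split_ifs) <;> simp_all

lemma near_refl (v : Vertex k) : Near b v v :=
  ⟨(step_proj v).symm, (step_proj v).symm⟩

lemma Near.symm {v v' : Vertex k} (h : Near b v v') : Near b v' v := ⟨h.2, h.1⟩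

lemma Near.linked {v v' : Vertex k} (h : Near b v v') : Linked (proj b v) (proj b v') := by
  obtain ⟨h₁, -⟩ := h
  cases v <;> cases v' <;> simp_all [step, proj]

lemma Near.eq_of_proj_eq {v v' w : Vertex k} (hv : Near b v w) (hv' : Near b v' w)
    (hp : proj b v = proj b v') : v = v' := by
  rw [hv.2, hv'.2, hp]

lemma near_step {v : Vertex k} (hv : v.Reduced) {c : Colour k} (hc : Linked (proj b v) c) :
    Near b v (step b v c) := by
  refine ⟨by rw [proj_step hc], ?_⟩
  rcases v with w | ⟨j, w⟩ <;> rcases c with h | j'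
  · simp_all [step, proj]
  · rcases w with _ | ⟨i, w⟩ <;> simp [step, proj]
    split_ifs <;> simp_all
  · simp only [step, proj]
    split_ifs
    · simp
    · rcases w with _ | ⟨i, w⟩ <;> simp_all [eq_comm]
  · simp_all [step, proj]

lemma step_step {v : Vertex k} (hv : v.Reduced) {c c' : Colour k} (hc : Linked (proj b v) c)
    (hc' : Linked (proj b v) c') (hcc' : Linked c c') :
    step b (step b v c) c' = step b v c' := by
  by_cases h : c = proj b v
  · rw [h, step_proj]
  by_cases h' : c' = proj b v
  · rw [h', ← (near_step hv hc).2, step_proj]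
  obtain rfl := hc.eq_of_ne hc' hcc' h h'
  simpa only [proj_step hc] using step_proj (b := b) (step b v c)

lemma near_step_of_linked {v : Vertex k} (hv : v.Reduced) {c c' : Colour k}
    (hc : Linked (proj b v) c) (hc' : Linked (proj b v) c') (hcc' : Linked c c') :
    Near b (step b v c) (step b v c') := by
  by_cases h : c = proj b v
  · rw [h, step_proj]
    exact near_step hv hc'
  by_cases h' : c' = proj b v
  · rw [h', step_proj]
    exact (near_step hv hc).symm
  rw [hc.eq_of_ne hc' hcc' h h']
  exact near_refl _

lemma near_step_step {v v' : Vertex k} (hv : v.Reduced) (hvv' : Near b v v') {c c' : Colour k}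
    (hc : Linked (proj b v) c) (hc' : Linked (proj b v) c')
    (hv'c' : Linked (proj b v') c') (hcc' : Linked c c') :
    Near b (step b v c) (step b v' c') := by
  rw [hvv'.1, step_step hv hvv'.linked hc' hv'c']
  exact near_step_of_linked hv hc hc' hcc'

variable (b) in
def lift (c : ℕ → Colour k) (v : Vertex k) : ℕ → Vertex k
  | 0 => v
  | l + 1 => step b (lift c v l) (c (l + 1))

section lift

variable {c c' : ℕ → Colour k} {v v' : Vertex k}

lemma reduced_lift (hv : v.Reduced) (l : ℕ) : (lift b c v l).Reduced := by
  induction l with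
  | zero => exact hv
  | succ l ih => exact reduced_step ih _

lemma proj_lift (hv : proj b v = c 0) (hc : ∀ l, Linked (c l) (c (l + 1))) (l : ℕ) :
    proj b (lift b c v l) = c l := by
  induction l with
  | zero => exact hv
  | succ l ih => exact proj_step (ih ▸ hc l)

lemma lift_eq_step (hv : v.Reduced) (hv0 : proj b v = c 0) (hc : ∀ l l', Linked (c l) (c l'))
    (l : ℕ) : lift b c v l = step b v (c l) := by
  induction l with
  | zero => rw [← hv0, step_proj, lift]
  | succ l ih => rw [lift, ih, step_step hv (hv0 ▸ hc _ _) (hv0 ▸ hc _ _) (hc _ _)]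

lemma near_lift (hv : v.Reduced) (hvv' : Near b v v') (hv0 : proj b v = c 0)
    (hv'0 : proj b v' = c' 0) (hc : ∀ l, Linked (c l) (c (l + 1)))
    (hc' : ∀ l, Linked (c' l) (c' (l + 1))) (hcc' : ∀ l, Linked (c l) (c' l))
    (hcc'₁ : ∀ l, Linked (c l) (c' (l + 1))) (l : ℕ) :
    Near b (lift b c v l) (lift b c' v' l) := by
  induction l with
  | zero => exact hvv'
  | succ l ih =>
    refine near_step_step (reduced_lift hv l) ih ?_ ?_ ?_ (hcc' _)
    · rw [proj_lift hv0 hc]; exact hc l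
    · rw [proj_lift hv0 hc]; exact hcc'₁ l
    · rw [proj_lift hv'0 hc']; exact hc' l

end lift

/-- Row `i` of the grid is lifted from the lift of column `0` at height `i`. Lifts of
neighbouring rows stay `Near`, so the closedness of the lift passes from row `i + 1` to row `i`;
the top row is pairwise linked, so its lift never leaves the neighbourhood of its start. -/
theorem lift_eq_self_of_grid {col : ℕ → ℕ → Colour k} {n M : ℕ} {v : Vertex k}
    (hv : v.Reduced) (hv0 : proj b v = col 0 0) (hper : ∀ i, col i M = col i 0)
    (hking : ∀ i i' l l', i ≤ i' + 1 → i' ≤ i + 1 → l ≤ l' + 1 → l' ≤ l + 1 →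
      Linked (col i l) (col i' l'))
    (htop : ∀ l l', Linked (col n l) (col n l')) :
    lift b (col 0) v M = v := by
  have hright (i l : ℕ) : Linked (col i l) (col i (l + 1)) := hking _ _ _ _ (by omega)
    (by omega) (by omega) (by omega)
  have hup (i l : ℕ) : Linked (col i l) (col (i + 1) l) := hking _ _ _ _ (by omega)
    (by omega) (by omega) (by omega)
  have hdiag (i l : ℕ) : Linked (col i l) (col (i + 1) (l + 1)) := hking _ _ _ _ (by omega)
    (by omega) (by omega) (by omega)
  set start := lift b (fun i => col i 0) v
  have hred (i : ℕ) : (start i).Reduced := reduced_lift hv i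
  have hproj (i : ℕ) : proj b (start i) = col i 0 :=
    proj_lift (c := fun i => col i 0) hv0 (fun i => hup i 0) i
  suffices ∀ i ≤ n, lift b (col i) (start i) M = start i from this 0 (Nat.zero_le n)
  refine fun i hi => Nat.decreasingInduction (fun i _ ih => ?_) ?_ hi
  · have hnear : Near b (start i) (start (i + 1)) := near_step (hred i) (hproj i ▸ hup i 0)
    have hrows := near_lift (hred i) hnear (hproj i) (hproj (i + 1)) (hright i) (hright (i + 1))
      (hup i) (hdiag i) M
    rw [ih] at hrows
    exact hrows.eq_of_proj_eq hnear (by rw [proj_lift (hproj i) (hright i), hper, hproj])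
  · rw [lift_eq_step (hred n) (hproj n) htop, hper, ← hproj, step_proj]

def word (σ : ℕ → Fin k) : ℕ → List (Fin k)
  | 0 => []
  | q + 1 => σ q :: word σ q

lemma hemColour_word (σ : ℕ → Fin k) (q : ℕ) :
    hemColour b (word σ (q + 1)) = if Even q then b else !b := by
  induction q with
  | zero => simp [word, hemColour]
  | succ q ih =>
    simp only [word, hemColour_cons] at ih ⊢
    rw [ih]
    by_cases hq : Even q <;> simp [hq, Nat.even_add_one]

section forced

variable {σ : ℕ → Fin k} {q : ℕ} {v : Vertex k}

/-- Where the lift of a forced row can be while it runs over the arc `[t q, t (q + 1)]`: at the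
hemisphere vertex reached through `σ 0, …, σ q`, at its parent cap, or at another child cap. -/
def OnArc (σ : ℕ → Fin k) (q : ℕ) (v : Vertex k) : Prop :=
  v = hemisphere (word σ (q + 1)) ∨ v = cap (σ q) (word σ q) ∨
    ∃ j ≠ σ q, v = cap j (word σ (q + 1))

lemma OnArc.step_inl (hv : OnArc σ q v) :
    OnArc σ q (step b v (.inl (hemColour b (word σ (q + 1))))) := by
  rcases hv with rfl | rfl | ⟨j, -, rfl⟩ <;> simp [OnArc, step, word]

lemma OnArc.step_inr (hv : OnArc σ q v) (j' : Fin k) : OnArc σ q (step b v (.inr j')) := by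
  rcases hv with rfl | rfl | ⟨j, hj, rfl⟩ <;> simp only [OnArc, step, word, List.head?_cons,
    Option.some.injEq, List.tail_cons]
  · split_ifs with hj'
    · exact .inr (.inl (by rw [hj']))
    · exact .inr (.inr ⟨j', Ne.symm hj', rfl⟩)
  · simp
  · exact .inr (.inr ⟨j, hj, rfl⟩)

lemma OnArc.succ (hσ : σ q ≠ σ (q + 1)) (hv : OnArc σ q v)
    (hp : proj b v = .inr (σ (q + 1))) : OnArc σ (q + 1) v := by
  rcases hv with rfl | rfl | ⟨j, -, rfl⟩ <;> simp only [proj, Sum.inr.injEq, reduceCtorEq] at hp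
  · exact absurd hp hσ
  · exact .inr (.inl (by rw [hp]))

lemma OnArc.ne_cap_nil (hv : OnArc σ (q + 1) v) (j : Fin k) : v ≠ cap j [] := by
  rcases hv with rfl | rfl | ⟨j, -, rfl⟩ <;> simp [word]

variable (b) in
/-- The colour pattern a nice curve forces on the bottom row of a grid whose columns cut each
arc `[t q, t (q + 1)]` into `R` cells. -/
structure IsForcedRow (σ : ℕ → Fin k) (R : ℕ) (c : ℕ → Colour k) : Prop where
  atStart : ∀ l, R ∣ l → c l = .inr (σ (l / R))
  atEnd : ∀ l, R ∣ l + 1 → c l = .inr (σ (l / R + 1))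
  inHemi : ∀ l h, c l = .inl h → h = if Even (l / R) then b else !b

variable {R : ℕ} {c : ℕ → Colour k}

lemma onArc_lift (hσ : ∀ q, σ q ≠ σ (q + 1)) (hc : ∀ l, Linked (c l) (c (l + 1)))
    (hrow : IsForcedRow b σ R c) (l : ℕ) : OnArc σ (l / R) (lift b c (cap (σ 0) []) l) := by
  induction l with
  | zero => simp [OnArc, word, lift]
  | succ l ih =>
    have hproj := proj_lift (b := b) (v := cap (σ 0) []) (by simp [proj, hrow.atStart 0]) hc l
    rw [lift]
    by_cases hR : R ∣ l + 1
    · rw [hrow.atEnd l hR] at hproj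
      rw [hrow.atStart _ hR, Nat.succ_div_of_dvd hR]
      exact (ih.succ (hσ _) hproj).step_inr _
    · rw [Nat.succ_div_of_not_dvd hR]
      rcases hcl : c (l + 1) with h | j
      · have := hrow.inHemi _ _ hcl
        rw [Nat.succ_div_of_not_dvd hR, ← hemColour_word] at this
        exact this ▸ ih.step_inl
      · exact ih.step_inr j

lemma lift_ne_of_isForcedRow (hσ : ∀ q, σ q ≠ σ (q + 1)) (hc : ∀ l, Linked (c l) (c (l + 1)))
    (hrow : IsForcedRow b σ R c) (hR : 0 < R) {l : ℕ} (hl : R ≤ l) :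
    lift b c (cap (σ 0) []) l ≠ cap (σ 0) [] := by
  obtain ⟨q, hq⟩ : ∃ q, l / R = q + 1 := Nat.exists_eq_add_one.mpr (Nat.div_pos hl hR)
  exact (hq ▸ onArc_lift hσ hc hrow l).ne_cap_nil _

end forced

end Vertex

open Vertex InnerProductSpace

/-- Caps of angular radius `θ = arccos r` whose centres are at angle at least `2 θ` are
disjoint. -/
lemma inner_le_of_lt_inner {V : Type*} [NormedAddCommGroup V] [InnerProductSpace ℝ V]
    {x a b : V} {r : ℝ} (hx : ‖x‖ ≤ 1) (ha : ‖a‖ = 1) (hb : ‖b‖ = 1) (hr : 0 ≤ r)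
    (hab : ⟪a, b⟫_ℝ ≤ 2 * r ^ 2 - 1) (hxa : r < ⟪x, a⟫_ℝ) : ⟪x, b⟫_ℝ ≤ r := by
  by_contra! hxb
  have hsum : ⟪x, a + b⟫_ℝ ≤ ‖a + b‖ :=
    (real_inner_le_norm x _).trans (mul_le_of_le_one_left (norm_nonneg _) hx)
  have hnorm : ‖a + b‖ ^ 2 ≤ 4 * r ^ 2 := by
    rw [norm_add_sq_real, ha, hb]
    linarith
  rw [inner_add_right] at hsum
  nlinarith [norm_nonneg (a + b)]

lemma cos_le_cos_of_le_of_le_two_pi_sub {a x : ℝ} (ha : 0 ≤ a) (hax : a ≤ x)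
    (hxa : x ≤ 2 * π - a) : cos x ≤ cos a := by
  rcases le_total x π with hx | hx
  · exact cos_le_cos_of_nonneg_of_le_pi ha hx hax
  · rw [← cos_two_pi_sub]
    exact cos_le_cos_of_nonneg_of_le_pi ha (by linarith) (by linarith)

lemma inner_eqPt (x : E3) (θ : ℝ) : ⟪x, eqPt θ⟫_ℝ = x 0 * cos θ + x 1 * sin θ := by
  simp [PiLp.inner_apply, Fin.sum_univ_three, eqPt, mul_comm]

lemma inner_eqPt_eqPt (θ θ' : ℝ) : ⟪eqPt θ, eqPt θ'⟫_ℝ = cos (θ - θ') := by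
  rw [inner_eqPt, cos_sub]
  simp [eqPt]

lemma norm_eqPt (θ : ℝ) : ‖eqPt θ‖ = 1 := by
  simpa [sphere2] using eqPt_mem_sphere2 θ

lemma exists_eq_eqPt {x : E3} (hx : x ∈ sphere2) (hx2 : x 2 = 0) :
    ∃ θ ∈ Set.Ico 0 (2 * π), x = eqPt θ := by
  have hsq : x 0 ^ 2 + x 1 ^ 2 = 1 := by
    have h := EuclideanSpace.real_norm_sq_eq x
    simp_all [sphere2, Fin.sum_univ_three]
  set z : ℂ := ⟨x 0, x 1⟩
  have hz : ‖z‖ = 1 := by simp [Complex.norm_eq_sqrt_sq_add_sq, z, hsq]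
  have hz0 : z ≠ 0 := norm_ne_zero_iff.mp (by rw [hz]; exact one_ne_zero)
  have hcos : cos (Complex.arg z) = x 0 := by rw [Complex.cos_arg hz0, hz]; simp [z]
  have hsin : sin (Complex.arg z) = x 1 := by rw [Complex.sin_arg, hz]; simp [z]
  have hxθ (θ : ℝ) (hc : cos θ = x 0) (hs : sin θ = x 1) : x = eqPt θ := by
    ext i; fin_cases i <;> simp [eqPt, hc, hs, hx2]
  rcases le_or_gt 0 (Complex.arg z) with h | h
  · exact ⟨_, ⟨h, by linarith [Complex.arg_le_pi z, pi_pos]⟩, hxθ _ hcos hsin⟩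
  · exact ⟨Complex.arg z + 2 * π, ⟨by linarith [Complex.neg_pi_lt_arg z], by linarith⟩,
      hxθ _ (by rw [cos_add_two_pi, hcos]) (by rw [sin_add_two_pi, hsin])⟩

lemma exists_mem_arcSide (hk : 0 < k) {x : E3} (hx : x ∈ Pset k) (hx2 : x 2 = 0) :
    ∃ j, x ∈ arcSide k j := by
  obtain ⟨θ, ⟨hθ₀, hθ⟩, rfl⟩ := exists_eq_eqPt hx.1 hx2
  have hk' : (0 : ℝ) < k := by exact_mod_cast hk
  have hπ := pi_pos
  set n := ⌊θ * k / (2 * π)⌋₊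
  have hn : n < k := (Nat.floor_lt (by positivity)).2 (by
    rw [div_lt_iff₀ (by positivity)]; nlinarith)
  have hlow : 2 * π * n / k ≤ θ := by
    have := Nat.floor_le (a := θ * k / (2 * π)) (by positivity)
    rw [le_div_iff₀ (by positivity)] at this
    rw [div_le_iff₀ hk']; linarith
  have hhigh : θ < 2 * π * (n + 1) / k := by
    have := Nat.lt_floor_add_one (θ * k / (2 * π))
    rw [div_lt_iff₀ (by positivity)] at this
    rw [lt_div_iff₀ hk']; linarith
  refine ⟨⟨n, hn⟩, θ, lt_of_le_of_ne hlow fun he => hx.2 ⟨⟨n, hn⟩, ?_⟩, hhigh, rfl⟩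
  rw [puncture, ← he]

variable (k) in
def capCentre (j : Fin k) : E3 := eqPt ((2 * j + 1) * π / k)

variable (k) in
/-- The cover of `ℙ`: the open hemispheres, and for each side `e_j` the open cap of angular
radius `π / k` around its midpoint, which meets the equator exactly in `e_j`. -/
def coverSet : Colour k → Set (PSub k)
  | .inl h => {x | (x : E3) ∈ hemi h}
  | .inr j => {x | cos (π / k) < ⟪(x : E3), capCentre k j⟫_ℝ}

lemma isOpen_coverSet (c : Colour k) : IsOpen (coverSet k c) := by
  have hcoord (i : Fin 3) : Continuous fun x : PSub k => (x : E3) i := by fun_prop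
  rcases c with (_ | _) | j
  · exact isOpen_lt (hcoord 2) continuous_const
  · exact isOpen_lt continuous_const (hcoord 2)
  · exact isOpen_lt continuous_const (by fun_prop)

lemma cos_lt_inner_capCentre {j : Fin k} {x : E3} (hx : x ∈ arcSide k j) :
    cos (π / k) < ⟪x, capCentre k j⟫_ℝ := by
  obtain ⟨θ, hθ₁, hθ₂, rfl⟩ := hx
  have hk : (1 : ℝ) ≤ k := by exact_mod_cast j.pos
  have hmid : (2 * (j : ℝ) + 1) * π / k = 2 * π * j / k + π / k := by ring
  have hend : 2 * π * ((j : ℝ) + 1) / k = 2 * π * j / k + 2 * (π / k) := by ring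
  rw [capCentre, inner_eqPt_eqPt, ← cos_abs (θ - _)]
  refine cos_lt_cos_of_nonneg_of_le_pi (abs_nonneg _) (div_le_self pi_pos.le hk) ?_
  rw [abs_lt]
  constructor <;> linarith

lemma inner_capCentre_le {j j' : Fin k} (h : j ≠ j') :
    ⟪capCentre k j, capCentre k j'⟫_ℝ ≤ 2 * cos (π / k) ^ 2 - 1 := by
  wlog hlt : j' < j generalizing j j'
  · rw [real_inner_comm]
    exact this h.symm (lt_of_le_of_ne (not_lt.1 hlt) h)
  have hk : (0 : ℝ) < k := by exact_mod_cast j.pos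
  have h₁ : (j' : ℝ) + 1 ≤ j := by exact_mod_cast hlt
  have h₂ : (j : ℝ) + 1 ≤ k := by exact_mod_cast j.is_lt
  have h₃ : (0 : ℝ) ≤ j' := by positivity
  have hπ := pi_pos
  rw [capCentre, capCentre, inner_eqPt_eqPt, ← cos_two_mul,
    show (2 * (j : ℝ) + 1) * π / k - (2 * j' + 1) * π / k = 2 * π * (j - j') / k by ring]
  refine cos_le_cos_of_le_of_le_two_pi_sub (by positivity) ?_ ?_
  · rw [mul_div_assoc', div_le_div_iff_of_pos_right hk]
    nlinarith
  · rw [show 2 * π - 2 * (π / k) = 2 * π * (k - 1) / k by field_simp,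
      div_le_div_iff_of_pos_right hk]
    nlinarith

lemma linked_of_mem_coverSet {x : PSub k} {c c' : Colour k} (hc : x ∈ coverSet k c)
    (hc' : x ∈ coverSet k c') : Linked c c' := by
  rcases c with h | j <;> rcases c' with h' | j' <;> simp only [Linked]
  · cases h <;> cases h' <;> simp_all [coverSet, hemi] <;> linarith
  · by_contra hne
    have hk : (2 : ℝ) ≤ k := by
      have := j'.is_lt
      have := Fin.val_ne_of_ne hne
      exact_mod_cast (show 2 ≤ k by omega)
    have hcos : 0 ≤ cos (π / k) := cos_nonneg_of_neg_pi_div_two_le_of_le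
      (by linarith [pi_pos, div_pos pi_pos (by linarith : (0 : ℝ) < k)])
      (div_le_div_of_nonneg_left pi_pos.le two_pos hk)
    exact not_lt_of_ge (inner_le_of_lt_inner (mem_sphere_zero_iff_norm.1 x.2.1).le
      (norm_eqPt _) (norm_eqPt _) hcos (inner_capCentre_le hne) hc) hc'

lemma exists_mem_coverSet (hk : 0 < k) (x : PSub k) : ∃ c, x ∈ coverSet k c := by
  rcases lt_trichotomy ((x : E3) 2) 0 with h | h | h
  · exact ⟨.inl false, h⟩
  · obtain ⟨j, hj⟩ := exists_mem_arcSide hk x.2 h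
    exact ⟨.inr j, cos_lt_inner_capCentre hj⟩
  · exact ⟨.inl true, h⟩

lemma eq_inr_of_mem_arcSide {x : PSub k} {j : Fin k} (hx : (x : E3) ∈ arcSide k j)
    {c : Colour k} (hc : x ∈ coverSet k c) : c = .inr j := by
  rcases c with h | j'
  · obtain ⟨θ, -, -, hθ⟩ := hx
    cases h <;> simp [coverSet, hemi, hθ, eqPt] at hc
  · exact congrArg _ (linked_of_mem_coverSet (c' := .inr j) hc (cos_lt_inner_capCentre hx))

lemma eq_of_mem_hemi {x : PSub k} {h h' : Bool} (hx : (x : E3) ∈ hemi h)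
    (hc : x ∈ coverSet k (.inl h')) : h' = h :=
  linked_of_mem_coverSet (c' := .inl h) hc hx

lemma lipschitzWith_circleExp : LipschitzWith 1 Circle.exp := by
  refine LipschitzWith.of_dist_le_mul fun a b => ?_
  have hdist : dist (Circle.exp a) (Circle.exp b) = ‖(Circle.exp a : ℂ) - Circle.exp b‖ :=
    dist_eq_norm (E := ℂ) _ _
  have hfactor : (Circle.exp a : ℂ) - Circle.exp b =
      Circle.exp b * (Complex.exp (Complex.I * ↑(a - b)) - 1) := by
    simp only [Circle.coe_exp, mul_sub, ← Complex.exp_add, mul_one]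
    push_cast
    ring_nf
  rw [NNReal.coe_one, one_mul, hdist, hfactor, norm_mul, Circle.norm_coe, one_mul, Real.dist_eq,
    ← Real.norm_eq_abs]
  exact Real.norm_exp_I_mul_ofReal_sub_one_le

def planar {X : Type*} (F : unitInterval × Circle → X) (p : ℝ × ℝ) : X :=
  F (Set.projIcc 0 1 zero_le_one p.1, Circle.exp p.2)

section planar

variable {X : Type*}

lemma planar_apply_zero (F : unitInterval × Circle → X) (u : ℝ) :
    planar F (0, u) = F (0, Circle.exp u) := by
  simp [planar]

lemma planar_apply_one (F : unitInterval × Circle → X) (u : ℝ) :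
    planar F (1, u) = F (1, Circle.exp u) := by
  simp [planar]

lemma planar_add_two_pi (F : unitInterval × Circle → X) (s u : ℝ) :
    planar F (s, u + 2 * π) = planar F (s, u) := by
  simp [planar]

/-- The map `(s, u) ↦ (s, exp u)` is `1`-Lipschitz, so a Lebesgue number of the pulled-back
cover of the compact space `unitInterval × Circle` also serves on the plane. -/
lemma exists_lebesgue_number_planar {ι : Type*} [TopologicalSpace X]
    (F : C(unitInterval × Circle, X)) {U : ι → Set X} (hU : ∀ i, IsOpen (U i))
    (hcover : ∀ x, ∃ i, x ∈ U i) :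
    ∃ δ > 0, ∀ q : ℝ × ℝ, ∃ i, ∀ p, dist p q < δ → planar F p ∈ U i := by
  obtain ⟨δ, hδ, hleb⟩ := lebesgue_number_lemma_of_metric isCompact_univ
    (fun i => (hU i).preimage F.continuous) (fun y _ => Set.mem_iUnion.2 (hcover (F y)))
  have hφ : LipschitzWith 1
      fun p : ℝ × ℝ => (Set.projIcc (0 : ℝ) 1 zero_le_one p.1, Circle.exp p.2) := by
    simpa using ((LipschitzWith.projIcc zero_le_one).comp LipschitzWith.prod_fst).prodMk
      (lipschitzWith_circleExp.comp LipschitzWith.prod_snd)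
  refine ⟨δ, hδ, fun q => ?_⟩
  obtain ⟨i, hi⟩ := hleb (Set.projIcc (0 : ℝ) 1 zero_le_one q.1, Circle.exp q.2) trivial
  exact ⟨i, fun p hp => hi ((hφ.dist_le_mul p q).trans_lt (by simpa using hp))⟩

end planar

def subdiv (t : ℕ → ℝ) (R l : ℕ) : ℝ :=
  t (l / R) + (l % R : ℕ) * (t (l / R + 1) - t (l / R)) / R

section subdiv

variable {t : ℕ → ℝ} {R : ℕ}

lemma subdiv_of_dvd {l : ℕ} (h : R ∣ l) : subdiv t R l = t (l / R) := by
  simp [subdiv, Nat.mod_eq_zero_of_dvd h]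

lemma subdiv_succ (hR : 0 < R) (l : ℕ) :
    subdiv t R (l + 1) = subdiv t R l + (t (l / R + 1) - t (l / R)) / R := by
  have h₁ := Nat.mod_add_div (l + 1) R
  have h₂ := Nat.mod_add_div l R
  have hR' : (R : ℝ) ≠ 0 := by positivity
  by_cases hdvd : R ∣ l + 1
  · rw [Nat.succ_div_of_dvd hdvd, Nat.mod_eq_zero_of_dvd hdvd, Nat.mul_succ] at h₁
    have hmod : ((l % R : ℕ) : ℝ) = R - 1 := by
      rw [eq_sub_iff_add_eq]
      exact_mod_cast (show l % R + 1 = R by omega)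
    rw [subdiv_of_dvd hdvd, Nat.succ_div_of_dvd hdvd, subdiv, hmod]
    field_simp
    ring
  · rw [Nat.succ_div_of_not_dvd hdvd] at h₁
    have hmod : (l + 1) % R = l % R + 1 := by omega
    rw [subdiv, subdiv, Nat.succ_div_of_not_dvd hdvd, hmod]
    push_cast
    ring

lemma subdiv_add_mul {p : ℕ} {T : ℝ} (ht : ∀ q, t (q + p) = t q + T) (hR : 0 < R) (l : ℕ) :
    subdiv t R (l + p * R) = subdiv t R l + T := by
  rw [subdiv, subdiv, Nat.add_mul_div_right _ _ hR, Nat.add_mul_mod_self_right,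
    add_right_comm _ p 1, ht, ht]
  ring

lemma le_subdiv (ht : Monotone t) (l : ℕ) : t (l / R) ≤ subdiv t R l := by
  have hgap : 0 ≤ t (l / R + 1) - t (l / R) := sub_nonneg.2 (ht (Nat.le_add_right _ 1))
  have : 0 ≤ ((l % R : ℕ) : ℝ) * (t (l / R + 1) - t (l / R)) / R := by positivity
  rw [subdiv]
  linarith

lemma subdiv_succ_le (ht : Monotone t) (hR : 0 < R) (l : ℕ) :
    subdiv t R (l + 1) ≤ t (l / R + 1) := by
  have hmod : ((l % R : ℕ) : ℝ) + 1 ≤ R := by exact_mod_cast Nat.mod_lt l hR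
  have hgap : 0 ≤ t (l / R + 1) - t (l / R) := sub_nonneg.2 (ht (Nat.le_add_right _ 1))
  calc subdiv t R (l + 1)
      = t (l / R) + ((l % R : ℕ) + 1) * (t (l / R + 1) - t (l / R)) / R := by
        rw [subdiv_succ hR, subdiv]; ring
    _ ≤ t (l / R) + R * (t (l / R + 1) - t (l / R)) / R := by gcongr
    _ = t (l / R + 1) := by field_simp; ring

lemma subdiv_lt_succ (ht : StrictMono t) (hR : 0 < R) (l : ℕ) :
    subdiv t R l < subdiv t R (l + 1) := by
  rw [subdiv_succ hR, lt_add_iff_pos_right]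
  exact div_pos (sub_pos.2 (ht (Nat.lt_succ_self _))) (by exact_mod_cast hR)

lemma subdiv_succ_sub_le {p : ℕ} {T : ℝ} (ht : Monotone t) (htp : ∀ q, t (q + p) = t q + T)
    (hp : 0 < p) (hR : 0 < R) (l : ℕ) :
    subdiv t R (l + 1) - subdiv t R l ≤ T / R := by
  have hle : t (l / R + 1) ≤ t (l / R) + T := by
    rw [← htp]
    exact ht (by omega)
  rw [subdiv_succ hR, add_sub_cancel_left]
  gcongr
  linarith

end subdiv

def cell (sp up : ℕ → ℝ) (i l : ℕ) : Set (ℝ × ℝ) :=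
  Set.Icc (sp i) (sp (i + 1)) ×ˢ Set.Icc (up l) (up (l + 1))

/-- Choosing the colour of a cell as a function of its image makes the colouring periodic in
`l` whenever the images are. -/
lemma exists_grid_colouring {X ι : Type*} {G : ℝ × ℝ → X} {U : ι → Set X} {δ : ℝ}
    (hleb : ∀ q, ∃ c, ∀ p, dist p q < δ → G p ∈ U c) {sp up : ℕ → ℝ}
    (hsp : ∀ i, sp (i + 1) - sp i < δ) (hup : ∀ l, up (l + 1) - up l < δ) {T : ℝ} {M : ℕ}
    (hG : ∀ s u, G (s, u + T) = G (s, u)) (hupM : ∀ l, up (l + M) = up l + T) :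
    ∃ col : ℕ → ℕ → ι, (∀ i l, ∀ p ∈ cell sp up i l, G p ∈ U (col i l)) ∧
      ∀ i, col i M = col i 0 := by
  have : Nonempty ι := ⟨(hleb 0).choose⟩
  refine ⟨fun i l => Classical.epsilon fun c => G '' cell sp up i l ⊆ U c, fun i l => ?_,
    fun i => ?_⟩
  · obtain ⟨c, hc⟩ := hleb (sp i, up l)
    have hspec := Classical.epsilon_spec (p := fun c => G '' cell sp up i l ⊆ U c) ⟨c, by
      rintro _ ⟨p, ⟨⟨hp₁, hp₂⟩, hp₃, hp₄⟩, rfl⟩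
      refine hc p (max_lt ?_ ?_) <;> rw [Real.dist_eq, abs_lt] <;>
        constructor <;> linarith [hsp i, hup l]⟩
    exact fun p hp => hspec ⟨p, hp, rfl⟩
  · have h₀ : up M = up 0 + T := by simpa using hupM 0
    have h₁ : up (M + 1) = up 1 + T := by simpa [add_comm] using hupM 1
    have hshift : G '' cell sp up i M = G '' cell sp up i 0 := by
      ext x
      constructor
      · rintro ⟨⟨s, u⟩, ⟨hs, hu₁, hu₂⟩, rfl⟩
        refine ⟨(s, u - T), ⟨hs, by linarith, by linarith⟩, ?_⟩
        simp only [← hG s (u - T), sub_add_cancel]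
      · rintro ⟨⟨s, u⟩, ⟨hs, hu₁, hu₂⟩, rfl⟩
        exact ⟨(s, u + T), ⟨hs, by linarith, by linarith⟩, hG s u⟩
    simp only [hshift]

/-- Cells `(i, l)` and `(i', l')` a king's move apart share the corner
`(sp (max i i'), up (max l l'))`. -/
lemma linked_of_cell {G : ℝ × ℝ → PSub k} {sp up : ℕ → ℝ} {col : ℕ → ℕ → Colour k}
    (hsp : Monotone sp) (hup : Monotone up)
    (hcol : ∀ i l, ∀ p ∈ cell sp up i l, G p ∈ coverSet k (col i l))
    {i i' l l' : ℕ} (hi : i ≤ i' + 1) (hi' : i' ≤ i + 1) (hl : l ≤ l' + 1) (hl' : l' ≤ l + 1) :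
    Linked (col i l) (col i' l') := by
  have hmax {f : ℕ → ℝ} (hf : Monotone f) {a a' : ℕ} (h : a' ≤ a + 1) :
      f (max a a') ∈ Set.Icc (f a) (f (a + 1)) :=
    ⟨hf (le_max_left _ _), hf (max_le (Nat.le_succ a) h)⟩
  have hp : (sp (max i i'), up (max l l')) ∈ cell sp up i l := ⟨hmax hsp hi', hmax hup hl'⟩
  have hp' : (sp (max i i'), up (max l l')) ∈ cell sp up i' l' := by
    rw [max_comm i, max_comm l]
    exact ⟨hmax hsp hi, hmax hup hl⟩
  exact linked_of_mem_coverSet (hcol i l _ hp) (hcol i' l' _ hp')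

section nice

variable {γ : C(Circle, PSub k)} {m : ℕ} {t : ℕ → ℝ} {σ : ℕ → Fin k}

lemma isForcedRow_of_isNice (h : IsNice k γ m t σ) {b : Bool}
    (halt : ∀ i s, t i < s → s < t (i + 1) →
      ((γ (Circle.exp s) : PSub k) : E3) ∈ hemi (if Even i then b else !b))
    {R : ℕ} (hR : 0 < R) {c : ℕ → Colour k}
    (hc : ∀ l, ∀ u ∈ Set.Icc (subdiv t R l) (subdiv t R (l + 1)),
      γ (Circle.exp u) ∈ coverSet k (c l)) :
    IsForcedRow b σ R c := by
  have hlt := subdiv_lt_succ h.mono hR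
  refine ⟨fun l hl => ?_, fun l hl => ?_, fun l b' hl => ?_⟩
  · refine eq_inr_of_mem_arcSide (h.code (l / R)) ?_
    simpa [subdiv_of_dvd hl] using hc l _ ⟨le_rfl, (hlt l).le⟩
  · refine eq_inr_of_mem_arcSide (h.code (l / R + 1)) ?_
    simpa [subdiv_of_dvd hl, Nat.succ_div_of_dvd hl] using hc l _ ⟨(hlt l).le, le_rfl⟩
  · obtain ⟨u, hu⟩ : ∃ u, u = (subdiv t R l + subdiv t R (l + 1)) / 2 := ⟨_, rfl⟩
    have h₁ := le_subdiv h.mono.monotone (R := R) l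
    have h₂ := subdiv_succ_le h.mono.monotone hR l
    have h₃ := hlt l
    exact eq_of_mem_hemi (halt _ u (by linarith) (by linarith))
      (hl ▸ hc l u ⟨by linarith, by linarith⟩)

lemma exists_colouring_of_homotopy (h : IsNice k γ m t σ) {x : PSub k}
    (F : γ.Homotopy (ContinuousMap.const Circle x)) :
    ∃ n R : ℕ, ∃ col : ℕ → ℕ → Colour k, 0 < R ∧ (∀ i, col i (2 * m * R) = col i 0) ∧
      (∀ i i' l l', i ≤ i' + 1 → i' ≤ i + 1 → l ≤ l' + 1 → l' ≤ l + 1 →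
        Linked (col i l) (col i' l')) ∧
      (∀ l l', Linked (col n l) (col n l')) ∧
      ∀ l, ∀ u ∈ Set.Icc (subdiv t R l) (subdiv t R (l + 1)),
        γ (Circle.exp u) ∈ coverSet k (col 0 l) := by
  obtain ⟨δ, hδ, hleb⟩ := exists_lebesgue_number_planar F.toContinuousMap isOpen_coverSet
    (exists_mem_coverSet (σ 0).pos)
  rw [F.coe_toContinuousMap] at hleb
  obtain ⟨n, hn⟩ := exists_nat_one_div_lt hδ
  obtain ⟨R, hR⟩ := exists_nat_gt (2 * π / δ)
  have hR₀ : 0 < R := by exact_mod_cast (div_pos two_pi_pos hδ).trans hR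
  set sp : ℕ → ℝ := fun i => i / (n + 1)
  have hsp : Monotone sp := fun i j hij => by simp only [sp]; gcongr
  have hsp' (i : ℕ) : sp (i + 1) - sp i < δ := by
    simp only [sp]; push_cast; rwa [← sub_div, add_sub_cancel_left]
  have hup' (l : ℕ) : subdiv t R (l + 1) - subdiv t R l < δ := by
    refine (subdiv_succ_sub_le h.mono.monotone h.t_periodic (by have := h.m_pos; omega) hR₀
      l).trans_lt ?_
    rwa [div_lt_comm₀ (by exact_mod_cast hR₀) hδ]
  have hup : Monotone (subdiv t R) := monotone_nat_of_le_succ fun l =>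
    (subdiv_lt_succ h.mono hR₀ l).le
  obtain ⟨col, hcol, hper⟩ := exists_grid_colouring hleb hsp' hup' (planar_add_two_pi F)
    (subdiv_add_mul h.t_periodic hR₀)
  refine ⟨n, R, col, hR₀, hper, fun i i' l l' => linked_of_cell hsp hup hcol, fun l l' => ?_,
    fun l u hu => ?_⟩
  · have hn₁ : sp (n + 1) = 1 := by
      simp only [sp]; push_cast; exact div_self (by positivity)
    have hmem (l : ℕ) : x ∈ coverSet k (col n l) := by
      have := hcol n l (1, subdiv t R l)
        ⟨⟨hn₁ ▸ hsp (Nat.le_succ n), hn₁.ge⟩, le_rfl, hup (Nat.le_succ l)⟩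
      rwa [planar_apply_one, F.apply_one] at this
    exact linked_of_mem_coverSet (hmem l) (hmem l')
  · have := hcol 0 l (0, u) ⟨⟨by simp [sp], by simp [sp]; positivity⟩, hu⟩
    rwa [planar_apply_zero, F.apply_zero] at this

end nice

end PuncturedSphere

open PuncturedSphere PuncturedSphere.Vertex in
theorem stmt11_general (k : ℕ) (γ : C(Circle, PSub k))
    (m : ℕ) (t : ℕ → ℝ) (σ : ℕ → Fin k) (h : IsNice k γ m t σ) :
    ¬ IsNullCurve γ := by
  rintro ⟨x, ⟨F⟩⟩
  obtain ⟨b, halt⟩ := h.alternate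
  obtain ⟨n, R, col, hR, hper, hking, htop, hbottom⟩ := exists_colouring_of_homotopy h F
  have hforced := isForcedRow_of_isNice h halt hR hbottom
  have hrow (l : ℕ) : Linked (col 0 l) (col 0 (l + 1)) :=
    hking 0 0 l (l + 1) (by omega) (by omega) (by omega) (by omega)
  have hclosed := lift_eq_self_of_grid (b := b) (v := cap (σ 0) []) (by simp)
    (by simp [proj, hforced.atStart 0 (dvd_zero R)]) hper hking htop
  exact lift_ne_of_isForcedRow h.adjacent hrow hforced hR
    (Nat.le_mul_of_pos_left R (by have := h.m_pos; omega)) hclosed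

/-- Every nice closed curve in the punctured sphere is not nullhomotopic. -/
theorem stmt11 (k : ℕ) (hk : 3 ≤ k) (γ : C(Circle, PSub k))
    (m : ℕ) (t : ℕ → ℝ) (σ : ℕ → Fin k) (h : IsNice k γ m t σ) :
    ¬ IsNullCurve γ :=
  stmt11_general k γ m t σ h
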